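/- The series E defined by E = Y + E/Y − E∖Y equals Σ_{n≥1} Σ_{t∈Y_n} μ(c_n, t) t, where μ is the Möbius function of the Tamari lattice on Y_n and c_n is the left comb (the minimum of the Tamari lattice). -/

import Mathlib

/-- Planar binary trees: a leaf, or an internal vertex with two subtrees. -/
inductive PBT : Type
  | leaf : PBT
  | node : PBT → PBT → PBT
  deriving DecidableEq

namespace PBT

/-- Number of internal vertices of a planar binary tree. -/
def size : PBT → ℕ
  | leaf => 0
  | node l r => size l + size r + 1

/-- `under u v` ("u ∖ v") grafts `v` at the rightmost leaf of `u`. -/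
def under : PBT → PBT → PBT
  | leaf, v => v
  | node l r, v => node l (under r v)

/-- `over u v` ("u / v") grafts `u` at the leftmost leaf of `v`. -/
def overGraft (u : PBT) : PBT → PBT
  | leaf => u
  | node l r => node (overGraft u l) r

/-- Number of internal vertices on the rightmost path (right spine). -/
def rightSpine : PBT → ℕ
  | leaf => 0
  | node _ r => rightSpine r + 1

/-- The left comb with `p` internal vertices. -/
def leftComb : ℕ → PBT
  | 0 => leaf
  | p + 1 => node (leftComb p) leaf

/-- The right comb with `q` internal vertices. -/
def rightComb : ℕ → PBT
  | 0 => leaf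
  | q + 1 => node leaf (rightComb q)

/-- The list of all factorizations `t = u ∖ v` (each exactly once). -/
def underFactors : PBT → List (PBT × PBT)
  | leaf => [(leaf, leaf)]
  | node l r => (leaf, node l r) :: (underFactors r).map (fun p => (node l p.1, p.2))

/-- The list of all factorizations `t = u / v` (each exactly once). -/
def overFactors : PBT → List (PBT × PBT)
  | leaf => [(leaf, leaf)]
  | node l r => (node l r, leaf) :: (overFactors l).map (fun p => (p.1, node p.2 r))

/-- Convolution of tree-expanded series dual to the over product:
`(A / B)_w = Σ_{s / t = w} A_s B_t`. -/
def overConv {R : Type*} [CommRing R] (f g : PBT → R) (w : PBT) : R :=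
  ((overFactors w).map (fun p => f p.1 * g p.2)).sum

/-- Convolution of tree-expanded series dual to the under product:
`(A ∖ B)_w = Σ_{s ∖ t = w} A_s B_t`. -/
def underConv {R : Type*} [CommRing R] (f g : PBT → R) (w : PBT) : R :=
  ((underFactors w).map (fun p => f p.1 * g p.2)).sum

/-- The list of all planar binary trees with `n` internal vertices. -/
def treesOfSize : ℕ → List PBT
  | 0 => [leaf]
  | n + 1 =>
    (List.range (n + 1)).attach.flatMap (fun i =>
      (treesOfSize i.1).flatMap (fun l =>
        (treesOfSize (n - i.1)).map (fun r => node l r)))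
  termination_by n => n
  decreasing_by
  · exact Nat.lt_succ_of_le (Nat.sub_le _ _)
  · exact List.mem_range.mp i.2

/-- `treePow B t` is the series `B^t = μ_t(B,…,B)`, the substitution of the
series `B` in all internal vertices of `t` (duplicial operad composition),
using the decomposition `l ∨ r = (l / Y) ∖ r`. -/
def treePow {R : Type*} [CommRing R] (B : PBT → R) : PBT → PBT → R
  | leaf => fun w => if w = leaf then 1 else 0
  | node l r => underConv (overConv (treePow B l) B) (treePow B r)

/-- Composition of tree-expanded series: `(A ∘ B)_w = Σ_t A_t (B^t)_w`,
where only trees with at most `|w|` vertices can contribute. -/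
def comp {R : Type*} [CommRing R] (A B : PBT → R) (w : PBT) : R :=
  (((List.range (size w + 1)).flatMap treesOfSize).map
    (fun t => A t * treePow B t w)).sum

/-- The series reduced to the one-vertex tree `Y`. -/
def Yser {R : Type*} [CommRing R] : PBT → R :=
  fun t => if t = node leaf leaf then 1 else 0

/-- The series reduced to the root tree `|` (unit for the over/under products). -/
def unitSer {R : Type*} [CommRing R] : PBT → R :=
  fun t => if t = leaf then 1 else 0

/-- Suspension of a tree-expanded series: the coefficient on a tree with `n`
internal vertices is multiplied by `(-1)^(n-1)`. -/
def susp {R : Type*} [CommRing R] (A : PBT → R) : PBT → R :=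
  fun t => (-1 : R) ^ (size t + 1) * A t

/-- One covering step of the Tamari order: a right rotation
`(a ∨ b) ∨ c ⟶ a ∨ (b ∨ c)` somewhere in the tree. -/
inductive TamariStep : PBT → PBT → Prop
  | rot (a b c : PBT) : TamariStep (node (node a b) c) (node a (node b c))
  | left {l l' : PBT} (r : PBT) : TamariStep l l' → TamariStep (node l r) (node l' r)
  | right (l : PBT) {r r' : PBT} : TamariStep r r' → TamariStep (node l r) (node l r')

/-- The Tamari partial order on planar binary trees. -/
def tle : PBT → PBT → Prop := Relation.ReflTransGen TamariStep

end PBT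

/-! Summing the equation `E = Y + E/Y - E∖Y` over a Tamari lower interval `{z | z ≤ t}`: the
trees `l / Y` below `t` are those with `l ≤ removeLast t`, while the trees `u ∖ Y` form an upper
set on which `u ↦ u ∖ Y` is an order embedding. So the two convolution terms cancel when
`t = v ∖ Y`, and otherwise only the `E/Y` term survives; by induction on the size,
`∑_{z ≤ t} E z = δ(t, c_n)`. Since `c_n` is the minimum of `Y_n`, the Möbius function
`μ(c_n, ·)` solves the same triangular system, and in a locally finite poset a function is
determined by its sums over lower intervals. -/

open Finset

theorem Finset.eq_of_sum_Iic_eq {α M : Type*} [PartialOrder α] [LocallyFiniteOrderBot α]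
    [AddCancelCommMonoid M] {s : Set α} (hs : IsLowerSet s) {f g : α → M}
    (h : ∀ t ∈ s, ∑ z ∈ Iic t, f z = ∑ z ∈ Iic t, g z) : ∀ t ∈ s, f t = g t := by
  have wf : WellFounded (α := α) (· < ·) :=
    (measure fun t => #(Iic t)).wf.mono fun _ _ hlt => card_lt_card (Iic_ssubset_Iic.2 hlt)
  intro t
  induction t using wf.induction with
  | _ t ih =>
    intro ht
    have hlt : ∑ z ∈ Iio t, f z = ∑ z ∈ Iio t, g z :=
      sum_congr rfl fun z hz => ih z (mem_Iio.1 hz) (hs (mem_Iio.1 hz).le ht)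
    have := h t ht
    rw [Iic_eq_cons_Iio, sum_cons, sum_cons, hlt] at this
    exact add_right_cancel this

namespace PBT

lemma size_eq_of_tamariStep {s t : PBT} (h : TamariStep s t) : size s = size t := by
  induction h <;> simp only [size] <;> omega

def leftWeight : PBT → ℕ
  | leaf => 0
  | node l r => leftWeight l + leftWeight r + size l

lemma leftWeight_lt_of_tamariStep {s t : PBT} (h : TamariStep s t) :
    leftWeight t < leftWeight s := by
  induction h with
  | rot => simp only [leftWeight, size]; omega
  | left r h ih => simp only [leftWeight, size_eq_of_tamariStep h]; omega
  | right l _ ih => simp only [leftWeight]; omega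

lemma eq_or_leftWeight_lt_of_tle {s t : PBT} (h : tle s t) :
    s = t ∨ leftWeight t < leftWeight s := by
  induction h with
  | refl => exact .inl rfl
  | tail _ hs ih =>
    refine .inr ((leftWeight_lt_of_tamariStep hs).trans_le ?_)
    rcases ih with rfl | ih
    exacts [le_rfl, ih.le]

instance : PartialOrder PBT where
  le := tle
  le_refl _ := Relation.ReflTransGen.refl
  le_trans _ _ _ := Relation.ReflTransGen.trans
  le_antisymm s t hst hts := by
    rcases eq_or_leftWeight_lt_of_tle hst with h | h
    · exact h
    rcases eq_or_leftWeight_lt_of_tle hts with h' | h'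
    · exact h'.symm
    omega

lemma size_eq_of_le {s t : PBT} (h : s ≤ t) : size s = size t := by
  induction h with
  | refl => rfl
  | tail _ hs ih => exact ih.trans (size_eq_of_tamariStep hs)

lemma leaf_le_iff {t : PBT} : leaf ≤ t ↔ t = leaf := by
  refine ⟨fun h => ?_, fun h => h ▸ le_rfl⟩
  induction h with
  | refl => rfl
  | tail _ hs ih => subst ih; cases hs

lemma mem_treesOfSize {n : ℕ} {t : PBT} : t ∈ treesOfSize n ↔ size t = n := by
  induction n using Nat.strong_induction_on generalizing t with
  | _ n ih =>
    rcases n with _ | n <;> rcases t with _ | ⟨l, r⟩ <;> rw [treesOfSize] <;>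
      simp only [List.mem_singleton, List.mem_flatMap, List.mem_map, List.mem_attach,
        List.mem_range, true_and, Subtype.exists, size, reduceCtorEq, iff_false,
        node.injEq, exists_eq_right_right, Nat.add_one_ne_zero]
    · rintro ⟨_, _, _, _, _, _, ⟨⟩⟩
    · constructor
      · rintro ⟨i, hi, hl, hr⟩
        rw [ih i (by omega)] at hl
        rw [ih (n - i) (by omega)] at hr
        omega
      · intro h
        exact ⟨size l, by omega, (ih _ (by omega)).2 rfl, (ih _ (by omega)).2 (by omega)⟩

lemma nodup_treesOfSize (n : ℕ) : (treesOfSize n).Nodup := by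
  induction n using Nat.strong_induction_on with
  | _ n ih =>
    rcases n with _ | n
    · simp [treesOfSize]
    rw [treesOfSize]
    refine List.nodup_flatMap.2 ⟨fun i hi => List.nodup_flatMap.2 ⟨fun l _ => ?_, ?_⟩, ?_⟩
    · exact (ih _ (by omega)).map fun _ _ h => (node.inj h).2
    · refine (ih _ (List.mem_range.1 i.2)).imp fun hne x hx hy => ?_
      simp only [List.mem_map] at hx hy
      obtain ⟨_, _, rfl⟩ := hx
      obtain ⟨_, _, h⟩ := hy
      exact hne (node.inj h).1.symm
    · refine (List.nodup_range.attach).imp fun hne x hx hy => hne (Subtype.ext ?_)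
      simp only [List.mem_flatMap, List.mem_map] at hx hy
      obtain ⟨l, hl, _, _, rfl⟩ := hx
      obtain ⟨l', hl', _, _, h⟩ := hy
      rw [(node.inj h).1, mem_treesOfSize] at hl'
      rw [mem_treesOfSize] at hl
      exact hl.symm.trans hl'

open Classical in
noncomputable instance : LocallyFiniteOrderBot PBT :=
  .ofIic PBT (fun t => {z ∈ (treesOfSize (size t)).toFinset | z ≤ t}) fun t z => by
    simpa [mem_treesOfSize] using fun h => size_eq_of_le h

lemma Iic_eq_filter (t : PBT) [DecidablePred (· ≤ t)] :
    Iic t = {z ∈ (treesOfSize (size t)).toFinset | z ≤ t} := by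
  ext z
  simpa [mem_treesOfSize] using fun h => size_eq_of_le h

lemma node_le_node {l l' r r' : PBT} (hl : l ≤ l') (hr : r ≤ r') : node l r ≤ node l' r' :=
  (Relation.ReflTransGen.lift (node · r) (fun _ _ => TamariStep.left r) _ _ hl).trans
    (Relation.ReflTransGen.lift (node l') (fun _ _ => TamariStep.right l') _ _ hr)

lemma rotate_le (a b c : PBT) : node (node a b) c ≤ node a (node b c) :=
  .single (.rot a b c)

@[simp] lemma size_leftComb (n : ℕ) : size (leftComb n) = n := by
  induction n <;> simp [leftComb, size, *]

lemma leftComb_add_succ_le (p q : ℕ) : leftComb (p + q + 1) ≤ node (leftComb p) (leftComb q) := by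
  induction q with
  | zero => rfl
  | succ q ih =>
    exact (node_le_node ih le_rfl).trans (rotate_le _ _ _)

lemma leftComb_size_le : ∀ t : PBT, leftComb (size t) ≤ t
  | leaf => le_rfl
  | node l r =>
    (leftComb_add_succ_le _ _).trans (node_le_node (leftComb_size_le l) (leftComb_size_le r))

lemma Iic_leftComb (n : ℕ) : Iic (leftComb n) = {leftComb n} := by
  ext z
  simp only [mem_Iic, mem_singleton]
  refine ⟨fun h => le_antisymm h ?_, fun h => h.le⟩
  simpa [size_eq_of_le h] using leftComb_size_le z

abbrev Y : PBT := node leaf leaf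

lemma size_under (u w : PBT) : size (under u w) = size u + size w := by
  induction u <;> simp only [under, size, *] <;> omega

lemma under_Y_ne_leaf (u : PBT) : under u Y ≠ leaf := by
  intro h
  simpa [size_under, size] using congrArg size h

lemma under_left_injective (w : PBT) : Function.Injective (under · w) := by
  intro u v h
  induction u generalizing v with
  | leaf =>
    cases v
    · rfl
    · have := congrArg size h
      simp only [under, size, size_under] at this
      omega
  | node a b _ ih =>
    cases v with
    | leaf =>
      have := congrArg size h
      simp only [under, size, size_under] at this
      omega
    | node c d =>
      obtain ⟨rfl, hbd⟩ := node.inj h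
      rw [ih hbd]

lemma under_Y_eq_Y_iff {u : PBT} : under u Y = Y ↔ u = leaf :=
  (under_left_injective Y).eq_iff (b := leaf)

lemma under_mono (w : PBT) : Monotone (under · w) := by
  refine Relation.ReflTransGen.lift _ fun u v h => ?_
  induction h with
  | rot a b c => exact .rot a b _
  | left r h => exact .left _ h
  | right l _ ih => exact .right l ih

lemma TamariStep.exists_of_under_Y {u t : PBT} (h : TamariStep (under u Y) t) :
    ∃ v, TamariStep u v ∧ under v Y = t := by
  induction u generalizing t with
  | leaf => rcases h with _ | ⟨_, h⟩ | ⟨_, h⟩ <;> cases h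
  | node a b _ ih =>
    rcases h with ⟨x, y, _⟩ | ⟨_, h⟩ | ⟨_, h⟩
    · exact ⟨_, .rot x y b, rfl⟩
    · exact ⟨_, .left b h, rfl⟩
    · obtain ⟨v, hv, rfl⟩ := ih h
      exact ⟨_, .right a hv, rfl⟩

lemma exists_of_under_Y_le {u t : PBT} (h : under u Y ≤ t) : ∃ v, u ≤ v ∧ under v Y = t := by
  induction h with
  | refl => exact ⟨u, le_rfl, rfl⟩
  | tail _ hs ih =>
    obtain ⟨v, huv, rfl⟩ := ih
    obtain ⟨w, hvw, rfl⟩ := hs.exists_of_under_Y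
    exact ⟨w, huv.trans (.single hvw), rfl⟩

lemma under_Y_le_under_Y {u v : PBT} : under u Y ≤ under v Y ↔ u ≤ v := by
  refine ⟨fun h => ?_, fun h => under_mono Y h⟩
  obtain ⟨w, huw, hw⟩ := exists_of_under_Y_le h
  rwa [← under_left_injective Y hw]

lemma Y_le_iff {t : PBT} : Y ≤ t ↔ t = Y := by
  refine ⟨fun h => ?_, fun h => h ▸ le_rfl⟩
  obtain ⟨v, hv, rfl⟩ := exists_of_under_Y_le (u := leaf) h
  rw [leaf_le_iff.1 hv]
  rfl

lemma under_Y_eq_leftComb_iff {u : PBT} {n : ℕ} : under u Y = leftComb n ↔ u = leaf ∧ n = 1 := by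
  rcases u with _ | ⟨a, b⟩ <;> rcases n with _ | _ | n <;>
    simp [under, leftComb, under_Y_ne_leaf]

-- `removeLast (a₁ ∨ (a₂ ∨ ⋯ (aₖ ∨ |))) = a₁ ∨ (a₂ ∨ ⋯ ∨ aₖ)`: contract the last vertex of the
-- right spine.
def removeLast : PBT → PBT
  | leaf => leaf
  | node l leaf => l
  | node l (node a b) => node l (removeLast (node a b))

lemma size_removeLast : ∀ {t : PBT}, t ≠ leaf → size (removeLast t) + 1 = size t
  | node l leaf, _ => by simp [removeLast, size]
  | node l (node a b), _ => by
    have := size_removeLast (t := node a b) nofun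
    simp only [removeLast, size] at this ⊢
    omega

@[simp] lemma removeLast_under_Y : ∀ u : PBT, removeLast (under u Y) = u
  | leaf => rfl
  | node a leaf => rfl
  | node a (node x y) => by
    have := removeLast_under_Y (node x y)
    obtain ⟨c, d, hcd⟩ : ∃ c d, under (node x y) Y = node c d := ⟨_, _, rfl⟩
    rw [hcd] at this
    simp only [under] at hcd ⊢
    rw [hcd, removeLast, this]

lemma TamariStep.removeLast_le {s t : PBT} (h : TamariStep s t) : removeLast s ≤ removeLast t := by
  induction h with
  | rot a b c =>
    cases c
    · rfl
    · exact rotate_le _ _ _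
  | left r h =>
    cases r
    · exact .single h
    · exact node_le_node (.single h) le_rfl
  | right l h ih =>
    rcases h with _ | _ | _ <;> exact node_le_node le_rfl ih

lemma removeLast_mono : Monotone removeLast := by
  intro s t h
  induction h with
  | refl => rfl
  | tail _ hs ih => exact ih.trans hs.removeLast_le

lemma node_removeLast_le : ∀ {t : PBT}, t ≠ leaf → node (removeLast t) leaf ≤ t
  | node _ leaf, _ => le_rfl
  | node _ (node a b), _ =>
    (rotate_le _ _ _).trans (node_le_node le_rfl (node_removeLast_le (t := node a b) nofun))

lemma node_leaf_le_iff {l t : PBT} (ht : t ≠ leaf) : node l leaf ≤ t ↔ l ≤ removeLast t :=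
  ⟨fun h => removeLast_mono h, fun h => (node_le_node h le_rfl).trans (node_removeLast_le ht)⟩

lemma eq_leftComb_of_removeLast_eq : ∀ {t : PBT} {n : ℕ}, t ≠ leaf →
    t ∉ Set.range (under · Y) → removeLast t = leftComb n → t = leftComb (n + 1)
  | node l leaf, _, _, _, h => by
    rw [removeLast] at h
    rw [h]
    rfl
  | node l (node a b), n, _, ht, h => by
    rcases n with _ | n
    · cases h
    simp only [removeLast, leftComb, node.injEq] at h
    obtain ⟨rfl, h⟩ := h
    rcases b with _ | _
    · rw [removeLast] at h
      subst h
      exact absurd ⟨node (leftComb n) leaf, rfl⟩ ht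
    · simp [removeLast] at h

section Series

variable {R : Type*} [CommRing R]

lemma Yser_apply (t : PBT) : (Yser t : R) = if t = Y then 1 else 0 := rfl

lemma overConv_Yser_node_leaf (f : PBT → R) (l : PBT) : overConv f Yser (node l leaf) = f l := by
  rcases l with _ | ⟨a, b⟩ <;> simp [overConv, overFactors, Yser, Function.comp_def]

lemma overConv_Yser_of_forall_ne (f : PBT → R) {t : PBT} (ht : ∀ l, node l leaf ≠ t) :
    overConv f Yser t = 0 := by
  rcases t with _ | ⟨a, _ | _⟩
  · simp [overConv, overFactors, Yser]
  · exact absurd rfl (ht a)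
  · simp [overConv, overFactors, Yser, Function.comp_def]

lemma underConv_node (f g : PBT → R) (l r : PBT) :
    underConv f g (node l r) = f leaf * g (node l r) + underConv (fun x => f (node l x)) g r := by
  simp [underConv, underFactors, Function.comp_def]

lemma underConv_Yser_under_Y (f : PBT → R) (u : PBT) : underConv f Yser (under u Y) = f u := by
  induction u generalizing f with
  | leaf => simp [underConv, underFactors, Yser, under]
  | node a b _ ih =>
    simp [under, underConv_node, ih, Yser_apply, under_Y_ne_leaf]

lemma underConv_Yser_of_notMem_range (f : PBT → R) {t : PBT} (ht : t ∉ Set.range (under · Y)) :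
    underConv f Yser t = 0 := by
  induction t generalizing f with
  | leaf => simp [underConv, underFactors, Yser]
  | node l r _ ih =>
    have hY : node l r ≠ Y := fun h => ht ⟨leaf, h.symm⟩
    have hr : r ∉ Set.range (under · Y) := fun ⟨v, hv⟩ => ht ⟨node l v, by simp [under, hv]⟩
    simp [underConv_node, Yser_apply, hY, ih _ hr]

lemma sum_Iic_Yser (t : PBT) : ∑ z ∈ Iic t, (Yser z : R) = if t = Y then 1 else 0 := by
  simp only [Yser_apply, sum_ite_eq', mem_Iic, Y_le_iff]

lemma sum_Iic_overConv_Yser (f : PBT → R) {t : PBT} (ht : t ≠ leaf) :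
    ∑ z ∈ Iic t, overConv f Yser z = ∑ l ∈ Iic (removeLast t), f l := by
  symm
  refine sum_of_injOn (node · leaf) (fun _ _ _ _ h => (node.inj h).1) (fun l hl => ?_)
    (fun z hz hz' => overConv_Yser_of_forall_ne f ?_)
    (fun l _ => (overConv_Yser_node_leaf f l).symm)
  · simpa [node_leaf_le_iff ht] using hl
  · rintro l rfl
    exact hz' ⟨l, by simpa [node_leaf_le_iff ht] using hz, rfl⟩

lemma sum_Iic_underConv_Yser_under_Y (f : PBT → R) (v : PBT) :
    ∑ z ∈ Iic (under v Y), underConv f Yser z = ∑ u ∈ Iic v, f u := by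
  symm
  refine sum_of_injOn (under · Y) (under_left_injective Y).injOn (fun u hu => ?_)
    (fun z hz hz' => underConv_Yser_of_notMem_range f ?_)
    (fun u _ => (underConv_Yser_under_Y f u).symm)
  · simpa [under_Y_le_under_Y] using hu
  · rintro ⟨u, rfl⟩
    exact hz' ⟨u, by simpa [under_Y_le_under_Y] using hz, rfl⟩

lemma sum_Iic_underConv_Yser_of_notMem_range (f : PBT → R) {t : PBT}
    (ht : t ∉ Set.range (under · Y)) : ∑ z ∈ Iic t, underConv f Yser z = 0 := by
  refine sum_eq_zero fun z hz => underConv_Yser_of_notMem_range f ?_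
  rintro ⟨u, rfl⟩
  obtain ⟨v, -, rfl⟩ := exists_of_under_Y_le (mem_Iic.1 hz)
  exact ht ⟨v, rfl⟩

theorem sum_Iic_eq_ite_leftComb {E : PBT → R}
    (hE : ∀ t, E t = Yser t + overConv E Yser t - underConv E Yser t) {t : PBT} (ht : t ≠ leaf) :
    ∑ z ∈ Iic t, E z = if t = leftComb (size t) then 1 else 0 := by
  have hsum : ∑ z ∈ Iic t, E z = (if t = Y then 1 else 0) + ∑ l ∈ Iic (removeLast t), E l -
      ∑ z ∈ Iic t, underConv E Yser z := by
    rw [sum_congr rfl fun z _ => hE z, sum_sub_distrib, sum_add_distrib, sum_Iic_Yser,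
      sum_Iic_overConv_Yser E ht]
  by_cases hr : t ∈ Set.range (under · Y)
  · obtain ⟨v, rfl⟩ := hr
    rw [hsum, removeLast_under_Y, sum_Iic_underConv_Yser_under_Y, add_sub_cancel_right]
    refine if_congr ?_ rfl rfl
    rw [under_Y_eq_Y_iff, under_Y_eq_leftComb_iff]
    exact ⟨fun h => ⟨h, by simp [h, size_under, size]⟩, And.left⟩
  · have hrl : removeLast t ≠ leaf := fun h =>
      hr ⟨leaf, (eq_leftComb_of_removeLast_eq (n := 0) ht hr h).symm⟩
    obtain ⟨n, hn⟩ : ∃ n, size (removeLast t) = n := ⟨_, rfl⟩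
    rw [hsum, if_neg fun h => hr ⟨leaf, h.symm⟩, sum_Iic_underConv_Yser_of_notMem_range E hr,
      zero_add, sub_zero, sum_Iic_eq_ite_leftComb hE hrl, ← size_removeLast ht, hn]
    refine if_congr ⟨eq_leftComb_of_removeLast_eq ht hr, fun h => ?_⟩ rfl rfl
    rw [h]
    rfl
termination_by size t
decreasing_by exact (size_removeLast ht).symm ▸ Nat.lt_succ_self _

end Series

open Classical in
lemma sum_Iic_mobius_leftComb {μ : PBT → PBT → ℤ} (hμrefl : ∀ t, μ t t = 1)
    (hμsum : ∀ s t : PBT, s ≠ t → tle s t →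
      ((treesOfSize (size t)).map (fun z => if tle s z ∧ tle z t then μ s z else 0)).sum = 0)
    (t : PBT) :
    ∑ z ∈ Iic t, μ (leftComb (size t)) z = if t = leftComb (size t) then 1 else 0 := by
  obtain ⟨n, hn⟩ : ∃ n, size t = n := ⟨_, rfl⟩
  rw [hn]
  split_ifs with h
  · subst h
    rw [Iic_leftComb, sum_singleton, hμrefl]
  · have := hμsum _ t (Ne.symm (hn ▸ h)) (hn ▸ leftComb_size_le t)
    rw [hn, ← List.sum_toFinset _ (nodup_treesOfSize n)] at this
    rw [← this, Iic_eq_filter, hn, sum_filter]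
    refine sum_congr rfl fun z hz => if_congr ?_ rfl rfl
    have hz : size z = n := mem_treesOfSize.1 (List.mem_toFinset.1 hz)
    exact ⟨fun h => ⟨hz ▸ leftComb_size_le z, h⟩, And.right⟩

end PBT

open PBT in
open Classical in
theorem tamari_mobius_series_general (E : PBT → ℤ) (μ : PBT → PBT → ℤ)
    (hE : ∀ t : PBT, E t = Yser t + overConv E Yser t - underConv E Yser t)
    (hμrefl : ∀ t : PBT, μ t t = 1)
    (hμsum : ∀ s t : PBT, s ≠ t → tle s t →
      ((treesOfSize (size t)).map
        (fun z => if tle s z ∧ tle z t then μ s z else 0)).sum = 0) :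
    ∀ t : PBT, t ≠ PBT.leaf → E t = μ (leftComb (size t)) t := by
  have hlower : IsLowerSet {t : PBT | t ≠ leaf} := fun a b hba ha hb =>
    ha (leaf_le_iff.1 (hb ▸ hba))
  refine eq_of_sum_Iic_eq hlower fun t ht => ?_
  rw [sum_Iic_eq_ite_leftComb hE ht, ← sum_Iic_mobius_leftComb hμrefl hμsum t]
  exact sum_congr rfl fun z hz => by rw [size_eq_of_le (mem_Iic.1 hz)]

open PBT in
open Classical in
/-- let `μ` be the Möbius function of the Tamari order (namely:
`μ t t = 1`, `μ s t = 0` unless `s ≤ t` in the Tamari order, and for `s < t`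
the sum of `μ s z` over the Tamari interval `[s,t]` vanishes). Then the series
`E` defined by `E = Y + E/Y - E∖Y` is `Σ_{n≥1} Σ_{t ∈ Y_n} μ(c_n, t) t`, where
`c_n` is the left comb, the minimum of the Tamari lattice on `Y_n`. -/
theorem tamari_mobius_series (E : PBT → ℤ) (μ : PBT → PBT → ℤ)
    (hE0 : E PBT.leaf = 0)
    (hE : ∀ t : PBT, E t = Yser t + overConv E Yser t - underConv E Yser t)
    (hμrefl : ∀ t : PBT, μ t t = 1)
    (hμnot : ∀ s t : PBT, ¬ tle s t → μ s t = 0)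
    (hμsum : ∀ s t : PBT, s ≠ t → tle s t →
      ((treesOfSize (size t)).map
        (fun z => if tle s z ∧ tle z t then μ s z else 0)).sum = 0) :
    ∀ t : PBT, t ≠ PBT.leaf → E t = μ (leftComb (size t)) t :=
  tamari_mobius_series_general E μ hE hμrefl hμsum
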